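/- Let A be an associative ℂ-algebra with elements a, b, let E be the exterior algebra over ℂ on generators ζ_0, ζ_1, …, ζ_{2k} (k ≥ 1), and let B = A ⊗_ℂ E. Set x_1 = a ⊗ ζ_0 + b ⊗ ζ_1 and x_i = 1 ⊗ ζ_i for i = 2, …, 2k. Then [x_1, [x_1,x_2]·[x_3,x_4]·…·[x_{2k−1},x_{2k}]] = 2^{k+1} · [a,b] ⊗ (ζ_0 ζ_1 ζ_2 ⋯ ζ_{2k}) in B. -/

import Mathlib

/-!
Every `x_i` anticommutes with every `x_j`, `j ≠ 1`: the generators `ζ_i` anticommute, and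
`1 ⊗ ζ_j` commutes with the `A`-factor. Hence `[x_{2j+1}, x_{2j+2}] = 2 x_{2j+1} x_{2j+2}` and
`w = 2^k x_1 x_2 Q` with `Q = ∏_{j ≥ 1} x_{2j+1} x_{2j+2}`, a product of pairs that commutes
with `x_1`. Moving `x_1` across `x_2` costs a sign, so `[x_1, w] = 2^{k+1} x_1² x_2 Q`, and
`x_1² = [a, b] ⊗ ζ_0 ζ_1` while `x_2 Q = 1 ⊗ ζ_2 ⋯ ζ_{2k}`.
-/

open TensorProduct

/-- The exterior (Grassmann) algebra over ℂ on generators `ζ_0, …, ζ_{2k}`. -/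
abbrev ExtAlg (k : ℕ) := ExteriorAlgebra ℂ (Fin (2 * k + 1) → ℂ)

/-- The generators `ζ_i` of the exterior algebra. -/
noncomputable def ζ (k : ℕ) (i : Fin (2 * k + 1)) : ExtAlg k :=
  ExteriorAlgebra.ι ℂ (Pi.single i 1)

/-- The elements `x_1 = a ⊗ ζ_0 + b ⊗ ζ_1` and `x_i = 1 ⊗ ζ_i` (for `i ≥ 2`) of `B = A ⊗ E`. -/
noncomputable def xElt (k : ℕ) (A : Type*) [Ring A] [Algebra ℂ A] (a b : A)
    (i : Fin (2 * k + 1)) : A ⊗[ℂ] ExtAlg k :=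
  if i.val = 1 then a ⊗ₜ[ℂ] ζ k ⟨0, Nat.succ_pos _⟩ + b ⊗ₜ[ℂ] ζ k i
  else (1 : A) ⊗ₜ[ℂ] ζ k i

theorem List.prod_ofFn_eq_mul_prod_pairs {M : Type*} [Monoid M] :
    ∀ {k : ℕ} (f : Fin (2 * k + 1) → M),
    (List.ofFn f).prod = f 0 * (List.ofFn fun j : Fin k =>
      f ⟨2 * j + 1, by omega⟩ * f ⟨2 * j + 2, by omega⟩).prod
  | 0, f => by simp
  | k + 1, f => by
    have ih := prod_ofFn_eq_mul_prod_pairs (k := k) fun i => f ⟨i + 2, by omega⟩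
    rw [List.ofFn_succ, List.ofFn_succ (n := 2 * k + 1), List.ofFn_succ (n := k)]
    simp only [List.prod_cons, mul_assoc]
    congr 2

section Anticommute

variable {R : Type*} [Ring R]

theorem sub_eq_two_mul_of_mul_eq_neg {y z : R} (h : y * z = -(z * y)) :
    y * z - z * y = 2 * (y * z) := by
  rw [two_mul, sub_eq_add_neg, ← h]

theorem prod_ofFn_sub_eq_two_pow_mul {k : ℕ} (y z : Fin k → R)
    (h : ∀ j, y j * z j = -(z j * y j)) :
    (List.ofFn fun j => y j * z j - z j * y j).prod
      = 2 ^ k * (List.ofFn fun j => y j * z j).prod := by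
  induction k with
  | zero => simp
  | succ k ih =>
    rw [List.ofFn_succ, List.ofFn_succ, List.prod_cons, List.prod_cons,
      ih _ _ fun j => h j.succ, sub_eq_two_mul_of_mul_eq_neg (h 0),
      mul_assoc 2, ← ((Commute.ofNat_left 2 _).pow_left k).left_comm, ← mul_assoc 2, pow_succ']

theorem commute_mul_of_mul_eq_neg {u y z : R} (hy : u * y = -(y * u)) (hz : u * z = -(z * u)) :
    Commute u (y * z) := by
  rw [Commute, SemiconjBy, ← mul_assoc, hy, neg_mul, mul_assoc, hz, mul_neg, neg_neg, mul_assoc]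

theorem commutator_mul_mul_of_mul_eq_neg {u v q : R} (hv : u * v = -(v * u)) (hq : Commute u q) :
    u * (u * v * q) - u * v * q * u = 2 * (u * u * (v * q)) := by
  have hswap : u * v * q * u = -(u * u * (v * q)) := by
    have hvu : v * u = -(u * v) := by rw [hv, neg_neg]
    rw [mul_assoc, mul_assoc, ← hq.eq, ← mul_assoc v, hvu]
    noncomm_ring
  rw [hswap]
  noncomm_ring

theorem commutator_two_pow_mul_of_mul_eq_neg {u v : R} {L : List R} (n : ℕ)
    (hv : u * v = -(v * u)) (hL : ∀ y ∈ L, Commute u y) :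
    u * (2 ^ n * (u * v * L.prod)) - 2 ^ n * (u * v * L.prod) * u
      = 2 ^ (n + 1) * (u * u * (v * L.prod)) := by
  rw [((Commute.ofNat_right u 2).pow_right n).left_comm, mul_assoc _ _ u, ← mul_sub,
    commutator_mul_mul_of_mul_eq_neg hv (Commute.list_prod_right _ _ hL), pow_succ]
  exact (mul_assoc _ _ _).symm

end Anticommute

section TensorProduct

variable {R A E : Type*} [CommSemiring R] [Ring A] [Algebra R A] [Ring E] [Algebra R E]

theorem tmul_mul_one_tmul_of_mul_eq_neg (a : A) {e e' : E} (h : e * e' = -(e' * e)) :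
    (a ⊗ₜ[R] e) * (1 ⊗ₜ e') = -((1 ⊗ₜ e') * (a ⊗ₜ e)) := by
  rw [Algebra.TensorProduct.tmul_mul_tmul, Algebra.TensorProduct.tmul_mul_tmul, mul_one, one_mul,
    h, tmul_neg]

theorem prod_ofFn_one_tmul {n : ℕ} (f : Fin n → E) :
    (List.ofFn fun j => (1 : A) ⊗ₜ[R] f j).prod = 1 ⊗ₜ (List.ofFn f).prod := by
  have := map_list_prod (Algebra.TensorProduct.includeRight (R := R) (A := A)) (List.ofFn f)
  rw [List.map_ofFn] at this
  exact this.symm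

end TensorProduct

theorem ζ_mul_self (k : ℕ) (i : Fin (2 * k + 1)) : ζ k i * ζ k i = 0 :=
  ExteriorAlgebra.ι_sq_zero _

theorem ζ_mul_ζ (k : ℕ) (i j : Fin (2 * k + 1)) : ζ k i * ζ k j = -(ζ k j * ζ k i) :=
  eq_neg_of_add_eq_zero_left (ExteriorAlgebra.ι_add_mul_swap _ _)

section xElt

variable {k : ℕ} {A : Type*} [Ring A] [Algebra ℂ A] (a b : A)

theorem xElt_of_val_ne_one {i : Fin (2 * k + 1)} (hi : i.val ≠ 1) :
    xElt k A a b i = 1 ⊗ₜ ζ k i :=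
  if_neg hi

theorem xElt_mul_xElt_of_val_ne_one (i : Fin (2 * k + 1)) {j : Fin (2 * k + 1)} (hj : j.val ≠ 1) :
    xElt k A a b i * xElt k A a b j = -(xElt k A a b j * xElt k A a b i) := by
  rw [xElt_of_val_ne_one a b hj, xElt]
  split_ifs
  · rw [add_mul, mul_add, tmul_mul_one_tmul_of_mul_eq_neg a (ζ_mul_ζ k _ _),
      tmul_mul_one_tmul_of_mul_eq_neg b (ζ_mul_ζ k _ _), neg_add]
  · exact tmul_mul_one_tmul_of_mul_eq_neg 1 (ζ_mul_ζ k _ _)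

theorem xElt_mul_self_of_val_eq_one {i : Fin (2 * k + 1)} (hi : i.val = 1) :
    xElt k A a b i * xElt k A a b i = (a * b - b * a) ⊗ₜ (ζ k ⟨0, by omega⟩ * ζ k i) := by
  rw [xElt, if_pos hi, add_mul, mul_add, mul_add]
  simp only [Algebra.TensorProduct.tmul_mul_tmul, ζ_mul_self, tmul_zero]
  rw [ζ_mul_ζ k i, tmul_neg, sub_tmul]
  abel

end xElt

/-- In `B = A ⊗ E`, with `x_1 = a ⊗ ζ_0 + b ⊗ ζ_1` and `x_i = 1 ⊗ ζ_i`,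
`[x_1, [x_1,x_2]·[x_3,x_4]⋯[x_{2k−1},x_{2k}]] = 2^{k+1}·[a,b] ⊗ (ζ_0 ζ_1 ⋯ ζ_{2k})`. -/
theorem stmt_17 (k : ℕ) (hk : 1 ≤ k) (A : Type*) [Ring A] [Algebra ℂ A] (a b : A) :
    letI x := xElt k A a b
    letI w : A ⊗[ℂ] ExtAlg k :=
      (List.ofFn fun j : Fin k =>
        x ⟨2 * j.val + 1, by have := j.2; omega⟩ * x ⟨2 * j.val + 2, by have := j.2; omega⟩
        - x ⟨2 * j.val + 2, by have := j.2; omega⟩ * x ⟨2 * j.val + 1, by have := j.2; omega⟩).prod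
    x ⟨1, by omega⟩ * w - w * x ⟨1, by omega⟩ =
      (2 ^ (k + 1) : ℂ) • ((a * b - b * a) ⊗ₜ[ℂ]
        (List.ofFn fun i : Fin (2 * k + 1) => ζ k i).prod) := by
  obtain ⟨m, rfl⟩ : ∃ m, k = m + 1 := ⟨k - 1, by omega⟩
  rw [prod_ofFn_sub_eq_two_pow_mul _ _ fun j => xElt_mul_xElt_of_val_ne_one a b _ (by simp),
    List.ofFn_succ (n := m), List.prod_cons]
  simp only [Fin.val_zero, mul_zero, zero_add]
  have hcomm : ∀ y ∈ List.ofFn fun j : Fin m =>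
      xElt (m + 1) A a b ⟨2 * j.succ + 1, by omega⟩ *
        xElt (m + 1) A a b ⟨2 * j.succ + 2, by omega⟩,
      Commute (xElt (m + 1) A a b ⟨1, by omega⟩) y := by
    simp only [List.mem_ofFn, forall_exists_index]
    rintro _ j rfl
    exact commute_mul_of_mul_eq_neg (xElt_mul_xElt_of_val_ne_one a b _ (by simp))
      (xElt_mul_xElt_of_val_ne_one a b _ (by simp))
  rw [commutator_two_pow_mul_of_mul_eq_neg _ (xElt_mul_xElt_of_val_ne_one a b _ (by simp)) hcomm,
    xElt_mul_self_of_val_eq_one a b rfl, xElt_of_val_ne_one a b (i := ⟨2, by omega⟩) (by simp)]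
  simp (disch := simp) only [xElt_of_val_ne_one, Algebra.TensorProduct.tmul_mul_tmul, one_mul]
  rw [prod_ofFn_one_tmul, Algebra.TensorProduct.tmul_mul_tmul, Algebra.TensorProduct.tmul_mul_tmul,
    List.prod_ofFn_eq_mul_prod_pairs, List.ofFn_succ (n := m), List.prod_cons,
    Algebra.smul_def, map_pow, map_ofNat]
  simp only [mul_one, mul_assoc]
  rfl
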